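/- A weakly initially m-compact topological space is m-pcap: every family of at most m nonempty open sets of X has a complete accumulation point, i.e., a point each of whose neighborhoods meets κ members of the family, where κ is the cardinality of the family. (Assume the equivalence that a space is m-pcap iff it is pseudo-(κ,κ)-compact for every infinite κ ≤ m.) -/
import Mathlib


open Cardinal Topology

universe u

/-- A topological space is weakly initially `m`-compact if every open cover of
cardinality `≤ m` has a finite subfamily whose union is dense. -/
def WeaklyInitiallyCompact (m : Cardinal.{u}) (X : Type u) [TopologicalSpace X] : Prop :=
  ∀ (ι : Type u) (O : ι → Set X), #ι ≤ m → (∀ i, IsOpen (O i)) →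
    (⋃ i, O i) = Set.univ → ∃ s : Finset ι, Dense (⋃ i ∈ s, O i)

/-- `X` is `m`-pcap: every family of at most `m` nonempty open sets has a complete
accumulation point, i.e., a point each of whose neighborhoods meets as many members
of the family as the cardinality of the family. -/
def Pcap (m : Cardinal.{u}) (X : Type u) [TopologicalSpace X] : Prop :=
  ∀ 𝓐 : Set (Set X), #𝓐 ≤ m → (∀ A ∈ 𝓐, IsOpen A ∧ A.Nonempty) →
    ∃ x : X, ∀ U ∈ 𝓝 x, #𝓐 ≤ #{A : 𝓐 // ((A : Set X) ∩ U).Nonempty}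

/-- `X` is pseudo-(κ,κ)-compact. -/
def PseudoCompact (κ : Cardinal.{u}) (X : Type u) [TopologicalSpace X] : Prop :=
  ∀ O : κ.out → Set X, (∀ i, IsOpen (O i)) → (∀ i, (O i).Nonempty) →
    ∃ x : X, ∀ U ∈ 𝓝 x, κ ≤ #{i : κ.out // (U ∩ O i).Nonempty}

theorem weaklyInitiallyCompact_pcap (m : Cardinal.{u}) (hm : ℵ₀ ≤ m)
    (X : Type u) [TopologicalSpace X]
    (hequiv : Pcap m X ↔ ∀ κ : Cardinal.{u}, ℵ₀ ≤ κ → κ ≤ m → PseudoCompact κ X)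
    (hX : WeaklyInitiallyCompact m X) : Pcap m X := by
  refine hequiv.mpr ?_
  intro κ hκ hκm O hopen hne
  by_contra hno
  push_neg at hno
  haveI hinf : Infinite κ.out :=
    Cardinal.infinite_iff.mpr (by rw [Cardinal.mk_out]; exact hκ)
  obtain ⟨e⟩ : Nonempty (κ.out ≃ Finset κ.out) := by
    rw [← Cardinal.eq, Cardinal.mk_finset_of_infinite]
  -- the open cover; G j is the union of all open sets whose trace on the family
  -- avoids the "zone" of j
  set G : κ.out → Set X :=
    fun j => ⋃₀ {U : Set X | IsOpen U ∧ ∀ i, (U ∩ O i).Nonempty → j ∉ e i} with hG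
  have hGopen : ∀ j, IsOpen (G j) := fun j => isOpen_sUnion (fun U hU => hU.1)
  have hcover : (⋃ j, G j) = Set.univ := by
    apply Set.eq_univ_of_forall
    intro x
    obtain ⟨U, hU, hUsmall⟩ := hno x
    obtain ⟨V, hVU, hVopen, hxV⟩ := mem_nhds_iff.mp hU
    set A : Set κ.out := {i | (V ∩ O i).Nonempty} with hA
    have hAcard : #A < κ := by
      refine lt_of_le_of_lt ?_ hUsmall
      apply Cardinal.mk_subtype_mono
      intro i hi
      exact hi.mono (Set.inter_subset_inter_left _ hVU)
    set B : Set κ.out := ⋃ i ∈ A, (↑(e i) : Set κ.out) with hB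
    have hBcard : #B < κ := by
      rcases A.finite_or_infinite with hAf | hAi
      · have hBf : B.Finite := hAf.biUnion (fun i _ => (e i).finite_toSet)
        exact lt_of_lt_of_le hBf.lt_aleph0 hκ
      · haveI : Nonempty A := hAi.to_subtype.nonempty
        have h1 : #B ≤ #A * ⨆ i : A, #(↑(e (i : κ.out)) : Set κ.out) :=
          Cardinal.mk_biUnion_le _ _
        have h2 : (⨆ i : A, #(↑(e (i : κ.out)) : Set κ.out)) ≤ ℵ₀ :=
          ciSup_le' (fun i => ((e (i : κ.out)).finite_toSet.lt_aleph0).le)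
        have h3 : #B ≤ #A * ℵ₀ := h1.trans (mul_le_mul_right h2 _)
        have h4 : #A * ℵ₀ = #A :=
          by
          have hA0 : ℵ₀ ≤ #A := Cardinal.infinite_iff.mp hAi.to_subtype
          exact Cardinal.mul_eq_left hA0 hA0 Cardinal.aleph0_ne_zero
        calc #B ≤ #A * ℵ₀ := h3
          _ = #A := h4
          _ < κ := hAcard
    obtain ⟨j, hj⟩ : ∃ j, j ∉ B := by
      by_contra h
      push_neg at h
      have : B = Set.univ := Set.eq_univ_of_forall h
      rw [this, Cardinal.mk_univ, Cardinal.mk_out] at hBcard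
      exact lt_irrefl _ hBcard
    refine Set.mem_iUnion.mpr ⟨j, ?_⟩
    refine ⟨V, ⟨hVopen, ?_⟩, hxV⟩
    intro i hi hji
    exact hj (Set.mem_biUnion (show i ∈ A from hi) hji)
  obtain ⟨s, hs⟩ := hX κ.out G (by rw [Cardinal.mk_out]; exact hκm) hGopen hcover
  obtain ⟨w, hw⟩ := hne (e.symm s)
  obtain ⟨y, hyO, hyUnion⟩ :=
    hs.inter_open_nonempty (O (e.symm s)) (hopen _) ⟨w, hw⟩
  obtain ⟨j, hjs, hyG⟩ := Set.mem_iUnion₂.mp hyUnion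
  obtain ⟨U, ⟨hUopen, hUcond⟩, hyU⟩ := hyG
  have hnotin : j ∉ e (e.symm s) := hUcond _ ⟨y, hyU, hyO⟩
  rw [Equiv.apply_symm_apply] at hnotin
  exact hnotin hjs
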